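/- arXiv:0911.4537 — 2 statements merged into one kernel-verified Lean document; each statement's English description precedes it below -/
import Mathlib

section
/- Let G be a finite abelian group and let Z/2Z act on G by inversion. The number of conjugacy classes of the semidirect product G ⋊ Z/2Z equals |G[2]| + (|G| - |G[2]|)/2 + |G/2G|, where G[2] is the 2-torsion subgroup of G. -/
/-- The action of `ZMod 2` (written multiplicatively) on a commutative group `G`
in which the nontrivial element acts by inversion. -/
noncomputable def invAction (G : Type*) [CommGroup G] :
    Multiplicative (ZMod 2) →* MulAut G where
  toFun a := if Multiplicative.toAdd a = 0 then 1 else MulEquiv.inv G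
  map_one' := by simp
  map_mul' a b := by
    have h : ∀ x : ZMod 2, x = 0 ∨ x = 1 := by decide
    have hab : Multiplicative.toAdd (a * b) = Multiplicative.toAdd a + Multiplicative.toAdd b :=
      rfl
    ext g
    rcases h (Multiplicative.toAdd a) with ha | ha <;>
      rcases h (Multiplicative.toAdd b) with hb | hb <;>
        simp [hab, ha, hb, (by decide : (1 : ZMod 2) + 1 = 0),
          (by decide : (1 : ZMod 2) ≠ 0)]

/-!
An element `(g, 1)` of `G ⋊ ℤ/2` is conjugate only to `(g, 1)` and `(g⁻¹, 1)`, while conjugating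
`(g, t)` by `(h, 1)` gives `(h² g, t)` and conjugating it by `(1, t)` gives `(g⁻¹, t)`, where
`g⁻¹ ≡ g` modulo squares. Hence the conjugacy classes are the inversion orbits on `G` together
with the classes of `G/G²`. By Burnside's lemma applied to the inversion action of `ℤ/2`,
twice the number of inversion orbits is `|G| + |G[2]|`.
-/

open MulAction

theorem SemidirectProduct.conj_eq_mk {N H : Type*} [Group N] [CommGroup H] {φ : H →* MulAut N}
    (c x : N ⋊[φ] H) :
    c * x * c⁻¹ = ⟨c.left * φ c.right x.left * φ x.right c.left⁻¹, x.right⟩ := by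
  ext
  · change c.left * φ c.right x.left * φ (c.right * x.right) (φ c.right⁻¹ c.left⁻¹) = _
    rw [← MulAut.mul_apply, ← map_mul, mul_right_comm, mul_inv_cancel, one_mul]
  · simp

theorem Multiplicative.zmod_two_cases (a : Multiplicative (ZMod 2)) : a = 1 ∨ a = .ofAdd 1 := by
  revert a
  decide

section SquareClasses

variable {G : Type*} [CommGroup G]

lemma QuotientGroup.sq_mk_eq_one_mod_squares (g : G) :
    (g : G ⧸ (powMonoidHom 2 : G →* G).range) ^ 2 = 1 := by
  rw [← QuotientGroup.mk_pow, QuotientGroup.eq_one_iff]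
  exact ⟨g, rfl⟩

lemma QuotientGroup.mk_inv_eq_mk_mod_squares (g : G) :
    ((g⁻¹ : G) : G ⧸ (powMonoidHom 2 : G →* G).range) = g := by
  rw [QuotientGroup.mk_inv, inv_eq_iff_mul_eq_one, ← pow_two, sq_mk_eq_one_mod_squares]

end SquareClasses

namespace invAction

variable {G : Type*} [CommGroup G]

noncomputable abbrev mulAction (G : Type*) [CommGroup G] : MulAction (Multiplicative (ZMod 2)) G :=
  MulAction.compHom G (invAction G)

attribute [local instance] mulAction

@[simp] lemma ofAdd_one_smul (g : G) : Multiplicative.ofAdd (1 : ZMod 2) • g = g⁻¹ := rfl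

lemma mk_smul_eq_mk_mod_squares (a : Multiplicative (ZMod 2)) (g : G) :
    ((a • g : G) : G ⧸ (powMonoidHom 2 : G →* G).range) = g := by
  rcases Multiplicative.zmod_two_cases a with rfl | rfl
  · rw [one_smul]
  · rw [ofAdd_one_smul, QuotientGroup.mk_inv_eq_mk_mod_squares]

def fixedByOfAddOneEquivKer :
    fixedBy G (Multiplicative.ofAdd (1 : ZMod 2)) ≃ (powMonoidHom 2 : G →* G).ker :=
  Equiv.subtypeEquivRight fun g => by
    simp [mem_fixedBy, MonoidHom.mem_ker, pow_two, inv_eq_iff_mul_eq_one]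

theorem two_mul_card_orbitRel_quotient [Finite G] :
    2 * Nat.card (orbitRel.Quotient (Multiplicative (ZMod 2)) G) =
      Nat.card G + Nat.card (powMonoidHom 2 : G →* G).ker := by
  classical
  have := Fintype.ofFinite G
  have burnside := sum_card_fixedBy_eq_card_orbits_mul_card_group (Multiplicative (ZMod 2)) G
  rw [show (Finset.univ : Finset (Multiplicative (ZMod 2))) = {1, .ofAdd 1} by decide,
    Finset.sum_pair (by decide)] at burnside
  simp only [← Nat.card_eq_fintype_card, Nat.card_congr fixedByOfAddOneEquivKer,
    fixedBy_one_eq_univ, Nat.card_univ] at burnside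
  have card_zmod_two : Nat.card (Multiplicative (ZMod 2)) = 2 := by
    simp [Nat.card_eq_fintype_card]
  rw [burnside, card_zmod_two, mul_comm]

noncomputable def conjInvariant (x : G ⋊[invAction G] Multiplicative (ZMod 2)) :
    orbitRel.Quotient (Multiplicative (ZMod 2)) G ⊕ G ⧸ (powMonoidHom 2 : G →* G).range :=
  if x.right = 1 then .inl (Quotient.mk'' x.left) else .inr x.left

lemma conjInvariant_mk_one (g : G) : conjInvariant ⟨g, 1⟩ = .inl (Quotient.mk'' g) :=
  if_pos rfl

lemma conjInvariant_mk_ofAdd_one (g : G) : conjInvariant ⟨g, .ofAdd 1⟩ = .inr g :=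
  if_neg (show Multiplicative.ofAdd (1 : ZMod 2) ≠ 1 by decide)

lemma conjInvariant_conj (c x : G ⋊[invAction G] Multiplicative (ZMod 2)) :
    conjInvariant (c * x * c⁻¹) = conjInvariant x := by
  obtain ⟨g, a⟩ := x
  obtain ⟨h, b⟩ := c
  rw [SemidirectProduct.conj_eq_mk]
  rcases Multiplicative.zmod_two_cases a with rfl | rfl
  · rw [conjInvariant_mk_one, conjInvariant_mk_one, map_one, MulAut.one_apply,
      mul_inv_cancel_comm]
    exact congrArg Sum.inl (Quotient.sound ⟨b, rfl⟩)
  · rw [conjInvariant_mk_ofAdd_one, conjInvariant_mk_ofAdd_one]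
    refine congrArg Sum.inr ?_
    change ((h * b • g * h⁻¹⁻¹ : G) : G ⧸ (powMonoidHom 2 : G →* G).range) = g
    rw [inv_inv, QuotientGroup.mk_mul, QuotientGroup.mk_mul, mk_smul_eq_mk_mod_squares,
      mul_right_comm, ← pow_two, QuotientGroup.sq_mk_eq_one_mod_squares, one_mul]

lemma isConj_of_conjInvariant_eq {x y : G ⋊[invAction G] Multiplicative (ZMod 2)}
    (hxy : conjInvariant x = conjInvariant y) : IsConj x y := by
  obtain ⟨g, a⟩ := x
  obtain ⟨g', a'⟩ := y
  rcases Multiplicative.zmod_two_cases a with rfl | rfl <;>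
    rcases Multiplicative.zmod_two_cases a' with rfl | rfl <;>
    simp only [conjInvariant_mk_one, conjInvariant_mk_ofAdd_one, Sum.inl.injEq, Sum.inr.injEq,
      reduceCtorEq] at hxy
  · obtain ⟨b, hb⟩ := Quotient.exact hxy
    refine (isConj_iff.mpr ⟨SemidirectProduct.inr b, ?_⟩).symm
    rw [SemidirectProduct.conj_eq_mk]
    ext
    · simp only [SemidirectProduct.left_inr, SemidirectProduct.right_inr, inv_one, map_one,
        one_mul, mul_one]
      exact hb
    · rfl
  · obtain ⟨h, hh⟩ := QuotientGroup.eq.mp hxy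
    refine isConj_iff.mpr ⟨SemidirectProduct.inl h, ?_⟩
    rw [SemidirectProduct.conj_eq_mk]
    ext
    · change h * g * h⁻¹⁻¹ = g'
      rw [inv_inv, mul_right_comm, ← pow_two, ← powMonoidHom_apply, hh, inv_mul_cancel_comm]
    · rfl

lemma conjInvariant_surjective : Function.Surjective (conjInvariant (G := G)) := by
  rintro (q | q)
  · obtain ⟨g, rfl⟩ := Quotient.mk''_surjective q
    exact ⟨⟨g, 1⟩, conjInvariant_mk_one g⟩
  · obtain ⟨g, rfl⟩ := QuotientGroup.mk_surjective q
    exact ⟨⟨g, .ofAdd 1⟩, conjInvariant_mk_ofAdd_one g⟩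

noncomputable def conjClassesEquiv : ConjClasses (G ⋊[invAction G] Multiplicative (ZMod 2)) ≃
    orbitRel.Quotient (Multiplicative (ZMod 2)) G ⊕ G ⧸ (powMonoidHom 2 : G →* G).range :=
  Equiv.ofBijective
    (Quotient.lift conjInvariant fun x _ hxy => by
      obtain ⟨c, rfl⟩ := isConj_iff.mp hxy
      exact (conjInvariant_conj c x).symm)
    ⟨fun p q => Quotient.inductionOn₂ p q fun _ _ hxy =>
      Quotient.sound (isConj_of_conjInvariant_eq hxy),
     fun q => (conjInvariant_surjective q).elim fun x hx => ⟨ConjClasses.mk x, hx⟩⟩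

end invAction

/-- The number of conjugacy classes of `G ⋊ ℤ/2ℤ` (with `ℤ/2ℤ` acting by inversion) is
`|G[2]| + (|G| - |G[2]|)/2 + |G/2G|`, where `G[2]` is the 2-torsion subgroup of `G`
(multiplicatively, the kernel of squaring) and `2G` is the subgroup of squares. -/
theorem card_conjClasses_semidirect (G : Type*) [CommGroup G] [Finite G] :
    Nat.card (ConjClasses (G ⋊[invAction G] Multiplicative (ZMod 2))) =
      Nat.card ((powMonoidHom 2 : G →* G).ker) +
        (Nat.card G - Nat.card ((powMonoidHom 2 : G →* G).ker)) / 2 +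
        Nat.card (G ⧸ (powMonoidHom 2 : G →* G).range) := by
  have two_mul_card_orbits := invAction.two_mul_card_orbitRel_quotient (G := G)
  have card_ker_le : Nat.card ((powMonoidHom 2 : G →* G).ker) ≤ Nat.card G :=
    Subgroup.card_le_card_group _
  rw [Nat.card_congr invAction.conjClassesEquiv, Nat.card_sum]
  omega
end

section
/- Let p be a prime with p ≡ 3 (mod 4). Then the elliptic curve E : y² = x³ + x over F_p has exactly p + 1 points over F_p (including the point at infinity); equivalently its trace of Frobenius is 0. -/
/-!
Over a finite field `F` with `|F| ≡ 3 (mod 4)`, `-1` is not a square, so the quadratic character `χ`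
satisfies `χ(-1) = -1`. For each `x` the equation `y² = x³ + x` has `1 + χ(x³ + x)` solutions, and
`x ↦ x³ + x` is odd, so the substitution `x ↦ -x` shows `∑ₓ χ(x³ + x) = -∑ₓ χ(x³ + x) = 0`.
Hence there are `|F|` affine points, plus the point at infinity.
-/

open Finset

namespace WeierstrassCurve.Affine

variable {R : Type*} [CommRing R] {W : Affine R}

lemma natCard_point_eq_natCard_equation_add_one [Finite R] (hΔ : W.Δ ≠ 0) :
    Nat.card W.Point = Nat.card {xy : R × R // W.Equation xy.1 xy.2} + 1 := by
  have e : W.Point ≃ Option {xy : R × R // W.Equation xy.1 xy.2} :=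
    (Equiv.subtypeUnivEquiv fun _ => trivial).symm.trans <|
      (nonsingularPointEquivSubtype trivial).trans <| Equiv.optionCongr <|
        Equiv.subtypeEquivRight fun _ => by
          simp [equation_iff_nonsingular_of_Δ_ne_zero hΔ]
  rw [Nat.card_congr e, Finite.card_option]

end WeierstrassCurve.Affine

section QuadraticChar

variable {F : Type*} [Field F] [Fintype F] [DecidableEq F]

lemma quadraticChar_neg_one_of_card_mod_four_eq_three (hF : Fintype.card F % 4 = 3) :
    quadraticChar F (-1) = -1 :=
  quadraticChar_neg_one_iff_not_isSquare.mpr fun h => FiniteField.isSquare_neg_one_iff.mp h hF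

lemma natCard_sq_eq_card_add_sum_quadraticChar (hF : ringChar F ≠ 2) (f : F → F) :
    (Nat.card {xy : F × F // xy.2 ^ 2 = f xy.1} : ℤ) =
      Fintype.card F + ∑ x, quadraticChar F (f x) := by
  have hfiber (x : F) : (Nat.card {y : F // y ^ 2 = f x} : ℤ) = quadraticChar F (f x) + 1 := by
    rw [← quadraticChar_card_sqrts hF, Set.toFinset_card, Nat.card_eq_fintype_card]
    rfl
  rw [Nat.card_congr (Equiv.subtypeProdEquivSigmaSubtype fun x y => y ^ 2 = f x),
    Nat.card_sigma, Nat.cast_sum, sum_congr rfl fun x _ => hfiber x, sum_add_distrib, add_comm]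
  simp

lemma sum_quadraticChar_eq_zero_of_odd (hχ : quadraticChar F (-1) = -1) {f : F → F}
    (hf : ∀ x, f (-x) = -f x) : ∑ x, quadraticChar F (f x) = 0 := by
  have hneg : ∑ x, quadraticChar F (f x) = -∑ x, quadraticChar F (f x) := calc
    ∑ x, quadraticChar F (f x) = ∑ x, quadraticChar F (f (-x)) :=
      (Fintype.sum_equiv (Equiv.neg F) _ _ fun _ => rfl).symm
    _ = -∑ x, quadraticChar F (f x) := by
      simp_rw [hf, neg_eq_neg_one_mul (f _), map_mul, hχ, neg_one_mul, sum_neg_distrib]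
  linarith

end QuadraticChar

namespace WeierstrassCurve

lemma Δ_j1728 {R : Type*} [CommRing R] : (⟨0, 0, 0, 1, 0⟩ : WeierstrassCurve R).Δ = -64 := by
  simp only [Δ, b₂, b₄, b₆, b₈]
  ring

lemma Affine.equation_j1728 {R : Type*} [CommRing R] {x y : R} :
    (⟨0, 0, 0, 1, 0⟩ : WeierstrassCurve R).toAffine.Equation x y ↔ y ^ 2 = x ^ 3 + x := by
  simp [equation_iff]

lemma natCard_point_j1728 {F : Type*} [Field F] [Fintype F] (hF : Fintype.card F % 4 = 3) :
    Nat.card (⟨0, 0, 0, 1, 0⟩ : WeierstrassCurve F).toAffine.Point = Fintype.card F + 1 := by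
  classical
  have hchar : ringChar F ≠ 2 := by
    rw [Ne, FiniteField.even_card_iff_char_two]
    omega
  have hΔ : (⟨0, 0, 0, 1, 0⟩ : WeierstrassCurve F).Δ ≠ 0 := by
    rw [Δ_j1728, neg_ne_zero, show (64 : F) = 2 ^ 6 by norm_num]
    exact pow_ne_zero 6 (Ring.two_ne_zero hchar)
  have hcount := natCard_sq_eq_card_add_sum_quadraticChar hchar fun x => x ^ 3 + x
  rw [sum_quadraticChar_eq_zero_of_odd (quadraticChar_neg_one_of_card_mod_four_eq_three hF)
    fun x => by ring, add_zero] at hcount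
  rw [Affine.natCard_point_eq_natCard_equation_add_one hΔ]
  simp_rw [Affine.equation_j1728]
  exact congrArg (· + 1) (mod_cast hcount)

end WeierstrassCurve

/-- For a prime `p ≡ 3 (mod 4)`, the elliptic curve `y² = x³ + x` over `𝔽_p`
has exactly `p + 1` points (including the point at infinity). -/
theorem card_points_j1728 (p : ℕ) [Fact p.Prime] (hp : p % 4 = 3) :
    let W : WeierstrassCurve (ZMod p) := ⟨0, 0, 0, 1, 0⟩
    Nat.card W.toAffine.Point = p + 1 := by
  intro W
  rw [WeierstrassCurve.natCard_point_j1728 (by rwa [ZMod.card]), ZMod.card]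
end
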